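/- Let n be an integer. Define g_n(Θ,φ) := exp((nφ/2)·k)·exp(−(Θ/2)·j)·exp(−(nφ/2)·k) and Ã_Θ(φ) := (1/2)(sin(nφ)·i − cos(nφ)·j). Then for all real Θ, φ: g_n(Θ,φ) · Ã_Θ(φ) · g_n(Θ,φ)⁻¹ + g_n(Θ,φ) · ∂_Θ( g_n(Θ,φ)⁻¹ ) = 0. (The dΘ-component of the Charap–Duff connection is gauged away by g_n.) -/

import Mathlib

/-! Conjugating `exp (-(Θ/2) j)` by `exp ((nφ/2) k)` rotates `j` by the angle `nφ` about the
`k`-axis, into `cos (nφ) j - sin (nφ) i = -2 Ã_Θ`. Hence `g_n(Θ, φ) = exp (Θ Ã_Θ)`, and for any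
`g = exp (Θ x)` one has `∂_Θ (g⁻¹) = -x g⁻¹`, so that `g x g⁻¹ + g ∂_Θ (g⁻¹) = 0`. -/

open scoped Quaternion

/-- The imaginary unit `i` of the real quaternions. -/
def qi : ℍ[ℝ] := ⟨0, 1, 0, 0⟩

/-- The imaginary unit `j` of the real quaternions. -/
def qj : ℍ[ℝ] := ⟨0, 0, 1, 0⟩

/-- The imaginary unit `k` of the real quaternions. -/
def qk : ℍ[ℝ] := ⟨0, 0, 0, 1⟩

/-- The gauge transformation `g_n(Θ,φ) = exp((nφ/2)k)·exp(−(Θ/2)j)·exp(−(nφ/2)k)`. -/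
noncomputable def gaugeG (n : ℤ) (Θ φ : ℝ) : ℍ[ℝ] :=
  NormedSpace.exp ((n * φ / 2 : ℝ) • qk) * NormedSpace.exp ((-(Θ / 2) : ℝ) • qj) *
    NormedSpace.exp ((-(n * φ / 2) : ℝ) • qk)

/-- The `dΘ`-component `Ã_Θ(φ) = (1/2)(sin(nφ)·i − cos(nφ)·j)` of the Charap–Duff
connection. -/
noncomputable def Atheta (n : ℤ) (φ : ℝ) : ℍ[ℝ] :=
  (2⁻¹ * Real.sin (n * φ)) • qi - (2⁻¹ * Real.cos (n * φ)) • qj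

open NormedSpace

section
variable {𝔸 : Type*} [NormedDivisionRing 𝔸] [NormedAlgebra ℝ 𝔸] [CompleteSpace 𝔸]

theorem exp_neg_of_normedAlgebra_real (x : 𝔸) : exp (-x) = (exp x)⁻¹ :=
  exp_neg_of_mem_ball ℝ <| (expSeries_radius_eq_top ℝ 𝔸).symm ▸ edist_lt_top _ _

theorem exp_smul_conj_add_mul_deriv_inv_eq_zero (x : 𝔸) (t : ℝ) :
    exp (t • x) * x * (exp (t • x))⁻¹ + exp (t • x) * deriv (fun s : ℝ => (exp (s • x))⁻¹) t
      = 0 := by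
  simp_rw [← exp_neg_of_normedAlgebra_real, ← smul_neg]
  rw [(hasDerivAt_exp_smul_const' (-x) t).deriv]
  noncomm_ring

end

@[simp] theorem re_qi : qi.re = 0 := rfl
@[simp] theorem imI_qi : qi.imI = 1 := rfl
@[simp] theorem imJ_qi : qi.imJ = 0 := rfl
@[simp] theorem imK_qi : qi.imK = 0 := rfl

@[simp] theorem re_qj : qj.re = 0 := rfl
@[simp] theorem imI_qj : qj.imI = 0 := rfl
@[simp] theorem imJ_qj : qj.imJ = 1 := rfl
@[simp] theorem imK_qj : qj.imK = 0 := rfl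

@[simp] theorem re_qk : qk.re = 0 := rfl
@[simp] theorem imI_qk : qk.imI = 0 := rfl
@[simp] theorem imJ_qk : qk.imJ = 0 := rfl
@[simp] theorem imK_qk : qk.imK = 1 := rfl

theorem exp_smul_of_re_eq_zero_of_norm_eq_one {q : ℍ[ℝ]} (hre : q.re = 0) (hq : ‖q‖ = 1)
    (t : ℝ) :
    exp (t • q) = Real.cos t + Real.sin t • q := by
  rw [Quaternion.exp_of_re_eq_zero _ (by simp [hre]), norm_smul, hq, mul_one, Real.norm_eq_abs,
    Real.cos_abs, smul_smul]
  rcases eq_or_ne t 0 with rfl | ht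
  · simp
  · congr 2
    rcases abs_choice t with h | h
    · rw [h, div_mul_cancel₀ _ ht]
    · rw [h, Real.sin_neg, neg_div_neg_eq, div_mul_cancel₀ _ ht]

theorem norm_qk : ‖qk‖ = 1 := by
  have h : ‖qk‖ * ‖qk‖ = 1 := by
    rw [← Quaternion.normSq_eq_norm_mul_self, Quaternion.normSq_def']
    simp
  nlinarith [norm_nonneg qk]

theorem exp_smul_qk (t : ℝ) : exp (t • qk) = Real.cos t + Real.sin t • qk :=
  exp_smul_of_re_eq_zero_of_norm_eq_one rfl norm_qk t

theorem exp_smul_qk_mul_qj_mul_inv (a : ℝ) :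
    exp (a • qk) * qj * (exp (a • qk))⁻¹ = Real.cos (2 * a) • qj - Real.sin (2 * a) • qi := by
  rw [← exp_neg_of_normedAlgebra_real, ← neg_smul, exp_smul_qk, exp_smul_qk, Real.cos_neg,
    Real.sin_neg, Real.sin_two_mul, Real.cos_two_mul']
  ext <;> simp <;> ring

theorem gaugeG_eq_exp (n : ℤ) (Θ φ : ℝ) : gaugeG n Θ φ = exp (Θ • Atheta n φ) := by
  -- `exp_conj` is stated over normed `ℚ`-algebras
  let _ : NormedAlgebra ℚ ℍ[ℝ] := .restrictScalars ℚ ℝ ℍ[ℝ]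
  rw [gaugeG, neg_smul (n * φ / 2 : ℝ), exp_neg, ← exp_conj _ _ (isUnit_exp _).ne_zero,
    mul_smul_comm, smul_mul_assoc, exp_smul_qk_mul_qj_mul_inv, mul_div_cancel₀ _ two_ne_zero]
  congr 1
  ext <;> simp [Atheta] <;> ring

/-- The `dΘ`-component of the Charap–Duff connection is gauged away by `g_n`:
`g_n·Ã_Θ·g_n⁻¹ + g_n·∂_Θ(g_n⁻¹) = 0`. -/
theorem gauge_transforms_theta_component_to_zero (n : ℤ) (Θ φ : ℝ) :
    gaugeG n Θ φ * Atheta n φ * (gaugeG n Θ φ)⁻¹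
      + gaugeG n Θ φ * deriv (fun t : ℝ => (gaugeG n t φ)⁻¹) Θ = 0 := by
  simp_rw [gaugeG_eq_exp]
  exact exp_smul_conj_add_mul_deriv_inv_eq_zero _ _
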